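/- arXiv:2208.04252 — 3 statements merged into one kernel-verified Lean document; each statement's English description precedes it below -/
import Mathlib

section
/- Let m ≥ 1/2 and let L ≥ 1 be a fixed integer. For each N > L, let W_{1,N}, …, W_{N,N} be i.i.d. real random variables, each with the normalized Gamma(m) distribution, and let T_N denote the top-L sum of (W_{1,N}, …, W_{N,N}). Then E[T_N] divided by (L/m) log N converges to 1 as N → ∞. -/
open MeasureTheory ProbabilityTheory Filter Real

/-- The top-`L` sum of the values `w 0, …, w (N-1)`: the maximum over subsets `S` of
cardinality `L` of `∑ n ∈ S, w n`, i.e. the sum of the `L` largest values. -/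
noncomputable def topSum {N : ℕ} (L : ℕ) (w : Fin N → ℝ) : ℝ :=
  sSup {x : ℝ | ∃ S : Finset (Fin N), S.card = L ∧ x = ∑ n ∈ S, w n}

/-!
Upper bound: for every threshold `t`, the top-`L` sum is at most `L t + ∑ (W n - t)⁺`, and a
Chernoff bound with the moment generating function `(r / (r - s)) ^ a` of `Gamma(a, r)` gives
`E (W - t)⁺ ≤ e^{-s t} (r / (r - s)) ^ a / s`; at `t = log N / s` with `s` close to `r` this yields
`E T_N ≤ (L / r + o(1)) log N`.

Lower bound: `T_N ≥ L t` as soon as `L` of the `W n` exceed `t`, and by independence the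
complementary event has probability at most `C(N, L - 1) P(W ≤ t) ^ (N - L + 1)`. The Gamma tail
decays no faster than `e^{-r' t}` for any `r' > r`, so at `t = log N / r'` this probability is at
most `N ^ (L - 1) exp (-c N ^ ε) → 0`, giving `E T_N ≥ (L / r' - o(1)) log N`.
-/

open scoped Topology

section TopSum

variable {N L : ℕ}

lemma topSum_eq_sup' (hLN : L ≤ N) (w : Fin N → ℝ) :
    topSum L w = (Finset.univ.powersetCard L).sup'
      (Finset.powersetCard_nonempty.2 (by simpa using hLN)) (fun S => ∑ n ∈ S, w n) := by
  rw [topSum, Finset.sup'_eq_csSup_image]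
  congr 1
  ext x
  simp [eq_comm]

lemma topSum_le_of_forall (hLN : L ≤ N) {w : Fin N → ℝ} {B : ℝ}
    (h : ∀ S : Finset (Fin N), S.card = L → ∑ n ∈ S, w n ≤ B) : topSum L w ≤ B := by
  rw [topSum_eq_sup' hLN]
  exact Finset.sup'_le _ _ fun S hS => h S (Finset.mem_powersetCard.1 hS).2

lemma sum_le_topSum (w : Fin N → ℝ) {S : Finset (Fin N)} (hS : S.card = L) :
    ∑ n ∈ S, w n ≤ topSum L w := by
  have hLN : L ≤ N := by simpa [hS] using S.card_le_univ
  rw [topSum_eq_sup' hLN]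
  exact Finset.le_sup' (fun S => ∑ n ∈ S, w n) (by simpa using hS)

lemma topSum_nonneg (hLN : L ≤ N) {w : Fin N → ℝ} (hw : ∀ n, 0 ≤ w n) : 0 ≤ topSum L w := by
  obtain ⟨S, -, hS⟩ := Finset.exists_subset_card_eq (by simpa using hLN :
    L ≤ (Finset.univ : Finset (Fin N)).card)
  exact (Finset.sum_nonneg fun n _ => hw n).trans (sum_le_topSum w hS)

lemma mul_le_topSum {w : Fin N → ℝ} {t : ℝ} (h : L ≤ (Finset.univ.filter (t < w ·)).card) :
    L * t ≤ topSum L w := by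
  obtain ⟨S, hS, hSL⟩ := Finset.exists_subset_card_eq h
  calc (L : ℝ) * t = ∑ _n ∈ S, t := by simp [hSL]
    _ ≤ ∑ n ∈ S, w n := Finset.sum_le_sum fun n hn => (Finset.mem_filter.1 (hS hn)).2.le
    _ ≤ topSum L w := sum_le_topSum w hSL

lemma topSum_le_mul_add_sum_max (hLN : L ≤ N) (w : Fin N → ℝ) (t : ℝ) :
    topSum L w ≤ L * t + ∑ n, max (w n - t) 0 := by
  refine topSum_le_of_forall hLN fun S hS => ?_
  calc ∑ n ∈ S, w n ≤ ∑ n ∈ S, (t + max (w n - t) 0) :=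
        Finset.sum_le_sum fun n _ => by linarith [le_max_left (w n - t) 0]
    _ = L * t + ∑ n ∈ S, max (w n - t) 0 := by simp [Finset.sum_add_distrib, hS]
    _ ≤ L * t + ∑ n, max (w n - t) 0 := by
        gcongr
        exact S.subset_univ

lemma measurable_topSum {Ω : Type*} [MeasurableSpace Ω] (hLN : L ≤ N)
    {W : Fin N → Ω → ℝ} (hW : ∀ n, Measurable (W n)) :
    Measurable fun ω => topSum L fun n => W n ω := by
  have : (fun ω => topSum L fun n => W n ω) = (Finset.univ.powersetCard L).sup'
      (Finset.powersetCard_nonempty.2 (by simpa using hLN)) (fun S ω => ∑ n ∈ S, W n ω) := by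
    ext ω
    rw [topSum_eq_sup' hLN, Finset.sup'_apply]
  rw [this]
  exact Finset.measurable_sup' _ fun S _ => Finset.measurable_sum _ fun n _ => hW n

end TopSum

lemma mul_exp_neg_le_rpow_mul_exp_neg {a r r' x : ℝ} (ha : 0 ≤ a) (hr : r < r') (hx : 1 ≤ x) :
    (r' - r) * exp (-(r' * x)) ≤ x ^ (a - 1) * exp (-(r * x)) := by
  have hx0 : 0 < x := by linarith
  have hδ : 0 < r' - r := by linarith
  calc (r' - r) * exp (-(r' * x)) = (r' - r) / exp ((r' - r) * x) * exp (-(r * x)) := by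
        rw [div_eq_mul_inv, ← exp_neg, mul_assoc, ← exp_add]; ring_nf
    _ ≤ (r' - r) / ((r' - r) * x) * exp (-(r * x)) := by
        gcongr; linarith [add_one_le_exp ((r' - r) * x)]
    _ = x ^ (-1 : ℝ) * exp (-(r * x)) := by rw [rpow_neg_one]; field_simp
    _ ≤ x ^ (a - 1) * exp (-(r * x)) := by
        gcongr; linarith

section Gamma

lemma ae_nonneg_gammaMeasure (a r : ℝ) : ∀ᵐ x ∂(gammaMeasure a r), 0 ≤ x := by
  rw [ae_iff]
  simp only [not_le]
  change gammaMeasure a r (Set.Iio 0) = 0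
  rw [gammaMeasure, withDensity_apply _ measurableSet_Iio]
  simpa using lintegral_gammaPDF_of_nonpos (le_refl (0 : ℝ)) (a := a) (r := r)

variable {a r s : ℝ}

lemma ofReal_exp_mul_mul_gammaPDF (hr : 0 ≤ r) (hs : s < r) (x : ℝ) :
    ENNReal.ofReal (exp (s * x)) * gammaPDF a r x
      = ENNReal.ofReal ((r / (r - s)) ^ a) * gammaPDF a (r - s) x := by
  have hrs : 0 < r - s := by linarith
  rcases lt_or_ge x 0 with hx | hx
  · simp [gammaPDF_of_neg hx]
  rw [gammaPDF_of_nonneg hx, gammaPDF_of_nonneg hx, ← ENNReal.ofReal_mul (exp_nonneg _),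
    ← ENNReal.ofReal_mul (by positivity), div_rpow hr hrs.le]
  congr 1
  have hexp : exp (s * x) * exp (-(r * x)) = exp (-((r - s) * x)) := by
    rw [← exp_add]; ring_nf
  have : (r - s) ^ a ≠ 0 := (rpow_pos_of_pos hrs a).ne'
  rw [← hexp]
  field_simp

lemma lintegral_exp_mul_gammaMeasure (ha : 0 < a) (hr : 0 ≤ r) (hs : s < r) :
    ∫⁻ x, ENNReal.ofReal (exp (s * x)) ∂(gammaMeasure a r)
      = ENNReal.ofReal ((r / (r - s)) ^ a) := by
  have hpdf (r : ℝ) : Measurable (gammaPDF a r) := (measurable_gammaPDFReal a r).ennreal_ofReal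
  rw [gammaMeasure, lintegral_withDensity_eq_lintegral_mul _ (hpdf r) (by fun_prop)]
  simp_rw [Pi.mul_apply, mul_comm (gammaPDF a r _), ofReal_exp_mul_mul_gammaPDF hr hs]
  rw [lintegral_const_mul _ (hpdf (r - s)),
    lintegral_gammaPDF_eq_one ha (by linarith), mul_one]

lemma integrable_exp_mul_gammaMeasure (ha : 0 < a) (hr : 0 ≤ r) (hs : s < r) :
    Integrable (fun x => exp (s * x)) (gammaMeasure a r) := by
  refine ⟨by fun_prop, ?_⟩
  simp only [hasFiniteIntegral_iff_ofReal (ae_of_all _ fun x => (exp_pos (s * x)).le),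
    lintegral_exp_mul_gammaMeasure ha hr hs, ENNReal.ofReal_lt_top]

lemma integral_exp_mul_gammaMeasure (ha : 0 < a) (hr : 0 ≤ r) (hs : s < r) :
    ∫ x, exp (s * x) ∂(gammaMeasure a r) = (r / (r - s)) ^ a := by
  rw [integral_eq_lintegral_of_nonneg_ae (ae_of_all _ fun x => (exp_pos _).le) (by fun_prop),
    lintegral_exp_mul_gammaMeasure ha hr hs, ENNReal.toReal_ofReal]
  have : 0 < r - s := by linarith
  positivity

lemma exists_mul_exp_le_gammaMeasure_Ioi {r' : ℝ} (ha : 0 < a) (hr : 0 < r) (hr' : r < r') :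
    ∃ c > 0, ∀ t ≥ 0, c * exp (-(r' * t)) ≤ (gammaMeasure a r).real (Set.Ioi t) := by
  have := isProbabilityMeasure_gammaMeasure ha hr
  have hK : 0 < r ^ a / Gamma a := by have := Gamma_pos_of_pos ha; positivity
  have hδ : 0 < r' - r := by linarith
  refine ⟨r ^ a / Gamma a * (r' - r) * exp (-(r' * 2)), by positivity, fun t ht => ?_⟩
  rw [measureReal_def, ← ENNReal.ofReal_le_iff_le_toReal (measure_ne_top _ _), gammaMeasure,
    withDensity_apply _ measurableSet_Ioi]
  -- On `(t + 1, t + 2]` we have `x ≥ 1`, so `x ^ (a - 1) ≥ x⁻¹` whatever the shape `a`.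
  calc ENNReal.ofReal (r ^ a / Gamma a * (r' - r) * exp (-(r' * 2)) * exp (-(r' * t)))
      = ∫⁻ _ in Set.Ioc (t + 1) (t + 2),
          ENNReal.ofReal (r ^ a / Gamma a * ((r' - r) * exp (-(r' * (t + 2))))) := by
        rw [mul_assoc _ (exp _), ← exp_add, mul_assoc _ (r' - r)]
        simp [show t + 2 - (t + 1) = 1 by ring, add_comm, mul_add]
    _ ≤ ∫⁻ x in Set.Ioc (t + 1) (t + 2), gammaPDF a r x := by
        refine setLIntegral_mono (measurable_gammaPDFReal a r).ennreal_ofReal fun x ⟨hx1, hx2⟩ => ?_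
        rw [gammaPDF_of_nonneg (by linarith), mul_assoc _ (x ^ (a - 1))]
        gcongr ENNReal.ofReal (_ * ?_)
        calc (r' - r) * exp (-(r' * (t + 2))) ≤ (r' - r) * exp (-(r' * x)) := by
              gcongr; linarith
          _ ≤ x ^ (a - 1) * exp (-(r * x)) :=
              mul_exp_neg_le_rpow_mul_exp_neg ha.le hr' (by linarith)
    _ ≤ ∫⁻ x in Set.Ioi t, gammaPDF a r x :=
        lintegral_mono_set (Set.Ioc_subset_Ioi_self.trans (Set.Ioi_subset_Ioi (by linarith)))

end Gamma

lemma max_sub_le_exp_mul {s : ℝ} (hs : 0 < s) (x t : ℝ) :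
    max (x - t) 0 ≤ exp (-(s * t)) / s * exp (s * x) := by
  have h : exp (-(s * t)) / s * exp (s * x) = exp (s * (x - t)) / s := by
    rw [mul_sub, sub_eq_neg_add, exp_add]; ring
  rw [h]
  refine max_le ?_ (by positivity)
  rw [le_div_iff₀ hs]
  linarith [add_one_le_exp (s * (x - t))]

section Moments

variable {Ω : Type*} [MeasurableSpace Ω] {P : Measure Ω} {X : Ω → ℝ} {s : ℝ}

lemma integrable_max_sub_of_integrable_exp (hX : AEMeasurable X P) (hs : 0 < s)
    (hexp : Integrable (fun ω => exp (s * X ω)) P) (t : ℝ) :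
    Integrable (fun ω => max (X ω - t) 0) P := by
  refine (hexp.const_mul (exp (-(s * t)) / s)).mono' (by fun_prop) (ae_of_all _ fun ω => ?_)
  rw [norm_of_nonneg (le_max_right (X ω - t) 0)]
  exact max_sub_le_exp_mul hs _ t

lemma integral_max_sub_le_of_integrable_exp (hX : AEMeasurable X P) (hs : 0 < s)
    (hexp : Integrable (fun ω => exp (s * X ω)) P) (t : ℝ) :
    ∫ ω, max (X ω - t) 0 ∂P ≤ exp (-(s * t)) / s * ∫ ω, exp (s * X ω) ∂P := by
  rw [← integral_const_mul]
  exact integral_mono (integrable_max_sub_of_integrable_exp hX hs hexp t)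
    (hexp.const_mul _) fun ω => max_sub_le_exp_mul hs _ t

variable {a r : ℝ}

lemma integrable_exp_mul_of_map_eq_gammaMeasure (hX : Measurable X)
    (hd : P.map X = gammaMeasure a r) (ha : 0 < a) (hr : 0 ≤ r) (hs : s < r) :
    Integrable (fun ω => exp (s * X ω)) P :=
  (integrable_map_measure (g := fun x => exp (s * x)) (by fun_prop) hX.aemeasurable).1
    (hd ▸ integrable_exp_mul_gammaMeasure ha hr hs)

lemma integral_exp_mul_of_map_eq_gammaMeasure (hX : Measurable X)
    (hd : P.map X = gammaMeasure a r) (ha : 0 < a) (hr : 0 ≤ r) (hs : s < r) :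
    ∫ ω, exp (s * X ω) ∂P = (r / (r - s)) ^ a := by
  rw [← integral_exp_mul_gammaMeasure ha hr hs, ← hd,
    integral_map hX.aemeasurable (by fun_prop)]

lemma ae_nonneg_of_map_eq_gammaMeasure (hX : Measurable X) (hd : P.map X = gammaMeasure a r) :
    ∀ᵐ ω ∂P, 0 ≤ X ω :=
  ae_of_ae_map hX.aemeasurable (hd ▸ ae_nonneg_gammaMeasure a r)

end Moments

section Counting

variable {Ω ι : Type*} [MeasurableSpace Ω] {P : Measure Ω} [Fintype ι]

lemma measure_le_card_filter_mem_le {β : Type*} [MeasurableSpace β] {X : ι → Ω → β}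
    {μ : Measure β} {s : Set β} [DecidablePred (· ∈ s)] (hX : ∀ i, Measurable (X i))
    (hind : iIndepFun X P)
    (hd : ∀ i, P.map (X i) = μ) (hs : MeasurableSet s) (k : ℕ) :
    P {ω | k ≤ (Finset.univ.filter fun i => X i ω ∈ s).card}
      ≤ (Fintype.card ι).choose k * μ s ^ k := by
  calc P {ω | k ≤ (Finset.univ.filter fun i => X i ω ∈ s).card}
      ≤ P (⋃ A ∈ Finset.univ.powersetCard k, ⋂ i ∈ A, X i ⁻¹' s) := by
        refine measure_mono fun ω hω => ?_
        obtain ⟨A, hA, hAk⟩ := Finset.exists_subset_card_eq hω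
        simp only [Set.mem_iUnion, Set.mem_iInter, Finset.mem_powersetCard, Set.mem_preimage]
        exact ⟨A, ⟨A.subset_univ, hAk⟩, fun i hi => (Finset.mem_filter.1 (hA hi)).2⟩
    _ ≤ ∑ A ∈ Finset.univ.powersetCard k, P (⋂ i ∈ A, X i ⁻¹' s) :=
        measure_biUnion_finset_le _ _
    _ = ∑ A ∈ Finset.univ.powersetCard k, μ s ^ k := by
        refine Finset.sum_congr rfl fun A hA => ?_
        rw [hind.measure_inter_preimage_eq_mul A (sets := fun _ => s) fun _ _ => hs]
        have hXs (i : ι) : P (X i ⁻¹' s) = μ s := by rw [← hd i, Measure.map_apply (hX i) hs]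
        simp [hXs, (Finset.mem_powersetCard.1 hA).2]
    _ = (Fintype.card ι).choose k * μ s ^ k := by simp

lemma measurableSet_le_card_filter_lt {X : ι → Ω → ℝ} (hX : ∀ i, Measurable (X i)) (k : ℕ)
    (t : ℝ) : MeasurableSet {ω | k ≤ (Finset.univ.filter fun i => t < X i ω).card} := by
  have : Measurable fun ω => (Finset.univ.filter fun i => t < X i ω).card := by
    simp only [fun ω => Finset.card_filter (fun i => t < X i ω) Finset.univ]
    exact Finset.measurable_sum _ fun i _ =>
      Measurable.ite (measurableSet_lt measurable_const (hX i)) measurable_const measurable_const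
  exact measurableSet_le measurable_const this

lemma measureReal_card_filter_lt_lt_le [IsFiniteMeasure P] {N L : ℕ} {W : Fin N → Ω → ℝ}
    {μ : Measure ℝ} [IsFiniteMeasure μ] (hLN : L ≤ N) (hW : ∀ n, Measurable (W n))
    (hind : iIndepFun W P) (hd : ∀ n, P.map (W n) = μ) (t : ℝ) :
    P.real {ω | (Finset.univ.filter fun n => t < W n ω).card < L}
      ≤ N.choose (N - L + 1) * μ.real (Set.Iic t) ^ (N - L + 1) := by
  have hsub : {ω | (Finset.univ.filter fun n => t < W n ω).card < L}
      ⊆ {ω | N - L + 1 ≤ (Finset.univ.filter fun n => W n ω ∈ Set.Iic t).card} := by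
    intro ω hω
    have := Finset.card_filter_add_card_filter_not (s := Finset.univ) (t < W · ω)
    simp only [Set.mem_ofPred_eq, not_lt, Set.mem_Iic, Finset.card_univ,
      Fintype.card_fin] at hω this ⊢
    omega
  have := measure_le_card_filter_mem_le hW hind hd (measurableSet_Iic (a := t)) (N - L + 1)
  rw [Fintype.card_fin] at this
  refine (measureReal_mono hsub).trans ?_
  simpa [measureReal_def, ENNReal.toReal_mul, ENNReal.toReal_pow] using
    ENNReal.toReal_mono (by finiteness) this

end Counting

section Expectation

variable {Ω : Type*} [MeasurableSpace Ω] {P : Measure Ω} {N L : ℕ} {W : Fin N → Ω → ℝ}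
  {a r : ℝ}

lemma integrable_topSum (hLN : L ≤ N) (ha : 0 < a) (hr : 0 < r) (hW : ∀ n, Measurable (W n))
    (hd : ∀ n, P.map (W n) = gammaMeasure a r) :
    Integrable (fun ω => topSum L fun n => W n ω) P := by
  have hmax (n : Fin N) : Integrable (fun ω => max (W n ω - 0) 0) P :=
    integrable_max_sub_of_integrable_exp (hW n).aemeasurable (half_pos hr)
      (integrable_exp_mul_of_map_eq_gammaMeasure (hW n) (hd n) ha hr.le (half_lt_self hr)) 0
  refine Integrable.mono' (g := fun ω => ∑ n, max (W n ω - 0) 0)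
    (integrable_finsetSum _ fun n _ => hmax n) (measurable_topSum hLN hW).aestronglyMeasurable ?_
  filter_upwards [ae_all_iff.2 fun n => ae_nonneg_of_map_eq_gammaMeasure (hW n) (hd n)] with ω hω
  rw [norm_of_nonneg (topSum_nonneg hLN hω)]
  simpa using topSum_le_mul_add_sum_max hLN (fun n => W n ω) 0

variable [IsProbabilityMeasure P]

lemma integral_topSum_le (hLN : L ≤ N) (ha : 0 < a) (hW : ∀ n, Measurable (W n))
    (hd : ∀ n, P.map (W n) = gammaMeasure a r) {s : ℝ} (hs : 0 < s) (hsr : s < r) (t : ℝ) :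
    ∫ ω, topSum L (fun n => W n ω) ∂P ≤ L * t + N * (exp (-(s * t)) / s * (r / (r - s)) ^ a) := by
  have hexp (n : Fin N) := integrable_exp_mul_of_map_eq_gammaMeasure (hW n) (hd n) ha
    (hs.le.trans hsr.le) hsr
  have hmax (n : Fin N) :=
    integrable_max_sub_of_integrable_exp (hW n).aemeasurable hs (hexp n) t
  calc ∫ ω, topSum L (fun n => W n ω) ∂P
      ≤ ∫ ω, (L * t + ∑ n, max (W n ω - t) 0) ∂P :=
        integral_mono (integrable_topSum hLN ha (hs.trans hsr) hW hd)
          ((integrable_const _).add (integrable_finsetSum _ fun n _ => hmax n))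
          fun ω => topSum_le_mul_add_sum_max hLN _ t
    _ = L * t + ∑ n, ∫ ω, max (W n ω - t) 0 ∂P := by
        rw [integral_add (integrable_const _) (integrable_finsetSum _ fun n _ => hmax n),
          integral_finsetSum _ fun n _ => hmax n]
        simp
    _ ≤ L * t + ∑ _n : Fin N, exp (-(s * t)) / s * (r / (r - s)) ^ a := by
        gcongr with n
        rw [← integral_exp_mul_of_map_eq_gammaMeasure (hW n) (hd n) ha (hs.le.trans hsr.le) hsr]
        exact integral_max_sub_le_of_integrable_exp (hW n).aemeasurable hs (hexp n) t
    _ = L * t + N * (exp (-(s * t)) / s * (r / (r - s)) ^ a) := by simp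

lemma le_integral_topSum (hLN : L ≤ N) (ha : 0 < a) (hr : 0 < r) (hW : ∀ n, Measurable (W n))
    (hind : iIndepFun W P) (hd : ∀ n, P.map (W n) = gammaMeasure a r) {t : ℝ} (ht : 0 ≤ t) :
    L * t * (1 - N.choose (N - L + 1) * (gammaMeasure a r).real (Set.Iic t) ^ (N - L + 1))
      ≤ ∫ ω, topSum L (fun n => W n ω) ∂P := by
  have := isProbabilityMeasure_gammaMeasure ha hr
  set G := {ω | L ≤ (Finset.univ.filter fun n => t < W n ω).card}
  have hG : MeasurableSet G := measurableSet_le_card_filter_lt hW L t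
  have hGc : P.real Gᶜ
      ≤ N.choose (N - L + 1) * (gammaMeasure a r).real (Set.Iic t) ^ (N - L + 1) := by
    simpa [G, Set.compl_ofPred] using measureReal_card_filter_lt_lt_le hLN hW hind hd t
  have hindicator : ∀ᵐ ω ∂P, G.indicator (fun _ => (L * t : ℝ)) ω ≤ topSum L fun n => W n ω := by
    filter_upwards [ae_all_iff.2 fun n => ae_nonneg_of_map_eq_gammaMeasure (hW n) (hd n)]
      with ω hω
    by_cases hωG : ω ∈ G
    · simpa [hωG] using mul_le_topSum hωG
    · simpa [hωG] using topSum_nonneg hLN hω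
  calc L * t * (1 - N.choose (N - L + 1) * (gammaMeasure a r).real (Set.Iic t) ^ (N - L + 1))
      ≤ L * t * P.real G := by
        rw [probReal_compl_eq_one_sub hG] at hGc
        gcongr
        linarith
    _ = ∫ ω, G.indicator (fun _ => (L * t : ℝ)) ω ∂P := by
        rw [integral_indicator_const _ hG, smul_eq_mul, mul_comm]
    _ ≤ ∫ ω, topSum L (fun n => W n ω) ∂P :=
        integral_mono_ae ((integrable_const _).indicator hG)
          (integrable_topSum hLN ha hr hW hd) hindicator

end Expectation

lemma le_sub_add_one_mul {N L : ℕ} (hL : 1 ≤ L) (hLN : L ≤ N) : N ≤ (N - L + 1) * L := by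
  obtain ⟨j, rfl⟩ := Nat.exists_eq_add_of_le hLN
  rw [show L + j - L + 1 = j + 1 by omega]
  nlinarith

lemma pow_le_exp_neg_mul {q : ℝ} (hq : 0 ≤ q) (k : ℕ) : q ^ k ≤ exp (-(k * (1 - q))) := by
  rw [neg_mul_eq_mul_neg, exp_nat_mul]
  exact pow_le_pow_left₀ hq (by linarith [one_sub_le_exp_neg (1 - q)]) k

lemma tendsto_pow_mul_exp_neg_rpow (j : ℕ) {c ε : ℝ} (hc : 0 < c) (hε : 0 < ε) :
    Tendsto (fun N : ℕ => (N : ℝ) ^ j * exp (-(c * (N : ℝ) ^ ε))) atTop (𝓝 0) := by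
  have := (tendsto_rpow_mul_exp_neg_mul_atTop_nhds_zero (j / ε) c hc).comp
    ((tendsto_rpow_atTop hε).comp tendsto_natCast_atTop_atTop)
  refine this.congr fun N => ?_
  simp only [Function.comp_apply, neg_mul]
  rw [← rpow_mul (Nat.cast_nonneg N), mul_div_cancel₀ _ hε.ne', rpow_natCast]

lemma exists_rpow_le_mul_gammaMeasure_Ioi {a r r' : ℝ} (ha : 0 < a) (hr : 0 < r) (hr' : r < r') :
    ∃ c > 0, ∃ ε > (0 : ℝ), ∀ N : ℕ, 1 ≤ N →
      c * (N : ℝ) ^ ε ≤ N * (gammaMeasure a r).real (Set.Ioi (log N / r')) := by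
  obtain ⟨r'', hr'', hr''r'⟩ := exists_between hr'
  obtain ⟨c, hc, htail⟩ := exists_mul_exp_le_gammaMeasure_Ioi ha hr hr''
  have hr'0 : 0 < r' := hr.trans hr'
  have hε : 0 < 1 - r'' / r' := by rw [sub_pos, div_lt_one hr'0]; exact hr''r'
  refine ⟨c, hc, 1 - r'' / r', hε, fun N hN => ?_⟩
  have hN : (0 : ℝ) < N := by exact_mod_cast hN
  calc c * (N : ℝ) ^ (1 - r'' / r') = N * (c * exp (-(r'' * (log N / r')))) := by
        rw [rpow_def_of_pos hN]
        nth_rewrite 2 [← exp_log hN]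
        rw [mul_left_comm, ← exp_add]
        ring_nf
    _ ≤ N * (gammaMeasure a r).real (Set.Ioi (log N / r')) := by
        gcongr
        exact htail _ (div_nonneg (log_natCast_nonneg N) hr'0.le)

lemma tendsto_choose_mul_gammaMeasure_Iic_pow {a r r' : ℝ} {L : ℕ} (ha : 0 < a) (hr : 0 < r)
    (hr' : r < r') (hL : 1 ≤ L) :
    Tendsto (fun N : ℕ => N.choose (N - L + 1)
      * (gammaMeasure a r).real (Set.Iic (log N / r')) ^ (N - L + 1)) atTop (𝓝 0) := by
  have := isProbabilityMeasure_gammaMeasure ha hr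
  obtain ⟨c, hc, ε, hε, hgrowth⟩ := exists_rpow_le_mul_gammaMeasure_Ioi ha hr hr'
  have hL0 : (0 : ℝ) < L := by exact_mod_cast hL
  refine squeeze_zero' (.of_forall fun N => by positivity) ?_
    (tendsto_pow_mul_exp_neg_rpow (L - 1) (div_pos hc hL0) hε)
  filter_upwards [eventually_ge_atTop L] with N hLN
  set p := (gammaMeasure a r).real (Set.Ioi (log N / r'))
  have hq : (gammaMeasure a r).real (Set.Iic (log N / r')) = 1 - p := by
    rw [← Set.compl_Ioi, probReal_compl_eq_one_sub measurableSet_Ioi]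
  have hchoose : (N.choose (N - L + 1) : ℝ) ≤ (N : ℝ) ^ (L - 1) := by
    rw [← Nat.choose_symm (by omega), show N - (N - L + 1) = L - 1 by omega]
    exact_mod_cast Nat.choose_le_pow N (L - 1)
  have hk : (N : ℝ) ≤ ((N - L + 1 : ℕ) : ℝ) * L := by exact_mod_cast le_sub_add_one_mul hL hLN
  calc (N.choose (N - L + 1) : ℝ) * (gammaMeasure a r).real (Set.Iic (log N / r')) ^ (N - L + 1)
      ≤ (N : ℝ) ^ (L - 1) * exp (-((N - L + 1 : ℕ) * p)) := by
        have hq0 : 0 ≤ 1 - p := hq ▸ measureReal_nonneg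
        have hpow := pow_le_exp_neg_mul hq0 (N - L + 1)
        rw [sub_sub_cancel] at hpow
        rw [hq]
        exact mul_le_mul hchoose hpow (pow_nonneg hq0 _) (by positivity)
    _ ≤ (N : ℝ) ^ (L - 1) * exp (-(c / L * (N : ℝ) ^ ε)) := by
        refine mul_le_mul_of_nonneg_left (exp_le_exp.2 (neg_le_neg ?_)) (by positivity)
        calc c / L * (N : ℝ) ^ ε ≤ N * p / L := by
              rw [div_mul_eq_mul_div]
              exact div_le_div_of_nonneg_right (hgrowth N (by omega)) hL0.le
          _ ≤ (N - L + 1 : ℕ) * p := by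
              rw [div_le_iff₀ hL0]
              nlinarith [measureReal_nonneg (μ := gammaMeasure a r) (s := Set.Ioi (log N / r'))]

lemma tendsto_div_const_mul_of_eventually_le {α : Type*} {l : Filter α} {f g : α → ℝ} {c : ℝ}
    (hc : 0 < c) (hg : ∀ᶠ x in l, 0 < g x) (hup : ∀ u, c < u → ∀ᶠ x in l, f x ≤ u * g x)
    (hlo : ∀ u, 0 < u → u < c → ∀ᶠ x in l, u * g x ≤ f x) :
    Tendsto (fun x => f x / (c * g x)) l (𝓝 1) := by
  refine tendsto_order.2 ⟨fun b hb => ?_, fun b hb => ?_⟩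
  · obtain ⟨b', hbb', hb'⟩ := exists_between (max_lt hb one_pos)
    filter_upwards [hlo (c * b') (by nlinarith [le_max_right b 0]) (by nlinarith), hg]
      with x hfx hgx
    rw [lt_div_iff₀ (by positivity)]
    calc b * (c * g x) < b' * (c * g x) :=
          mul_lt_mul_of_pos_right ((le_max_left b 0).trans_lt hbb') (by positivity)
      _ = c * b' * g x := by ring
      _ ≤ f x := hfx
  · obtain ⟨b', hb', hb'b⟩ := exists_between hb
    filter_upwards [hup (c * b') (by nlinarith), hg] with x hfx hgx
    rw [div_lt_iff₀ (by positivity)]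
    calc f x ≤ c * b' * g x := hfx
      _ = b' * (c * g x) := by ring
      _ < b * (c * g x) := mul_lt_mul_of_pos_right hb'b (by positivity)

section Family

variable {a r : ℝ} {L : ℕ} {Ω : ℕ → Type*} [∀ N, MeasurableSpace (Ω N)]
  {P : ∀ N, Measure (Ω N)} [∀ N, IsProbabilityMeasure (P N)] {W : ∀ N, Fin N → Ω N → ℝ}

lemma eventually_integral_topSum_le (ha : 0 < a) (hr : 0 < r)
    (hmeas : ∀ N, L < N → ∀ n, Measurable (W N n))
    (hdist : ∀ N, L < N → ∀ n, (P N).map (W N n) = gammaMeasure a r) {u : ℝ} (hu : L / r < u) :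
    ∀ᶠ N : ℕ in atTop, ∫ ω, topSum L (fun n => W N n ω) ∂(P N) ≤ u * log N := by
  have hu0 : 0 < u := lt_of_le_of_lt (by positivity) hu
  obtain ⟨s, hLs, hsr⟩ := exists_between ((div_lt_iff₀ hu0).2 ((div_lt_iff₀' hr).1 hu))
  have hs : 0 < s := lt_of_le_of_lt (by positivity) hLs
  have hLs' : L / s < u := (div_lt_iff₀ hs).2 ((div_lt_iff₀' hu0).1 hLs)
  set M := (r / (r - s)) ^ a
  have hlog : Tendsto (fun N : ℕ => (u - L / s) * log N) atTop atTop :=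
    (tendsto_log_atTop.comp tendsto_natCast_atTop_atTop).const_mul_atTop (by linarith)
  filter_upwards [eventually_gt_atTop L, hlog.eventually_ge_atTop (M / s)] with N hLN hN
  have hN0 : (0 : ℝ) < N := by exact_mod_cast (Nat.zero_le L).trans_lt hLN
  calc ∫ ω, topSum L (fun n => W N n ω) ∂(P N)
      ≤ L * (log N / s) + N * (exp (-(s * (log N / s))) / s * M) :=
        integral_topSum_le hLN.le ha (hmeas N hLN) (hdist N hLN) hs hsr _
    _ = L / s * log N + M / s := by
        rw [mul_div_cancel₀ _ hs.ne', exp_neg, exp_log hN0]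
        field_simp
    _ ≤ u * log N := by linarith

lemma eventually_mul_log_le_integral_topSum (ha : 0 < a) (hr : 0 < r) (hL : 1 ≤ L)
    (hmeas : ∀ N, L < N → ∀ n, Measurable (W N n)) (hindep : ∀ N, L < N → iIndepFun (W N) (P N))
    (hdist : ∀ N, L < N → ∀ n, (P N).map (W N n) = gammaMeasure a r) {u : ℝ} (hu0 : 0 < u)
    (hu : u < L / r) :
    ∀ᶠ N : ℕ in atTop, u * log N ≤ ∫ ω, topSum L (fun n => W N n ω) ∂(P N) := by
  have hL0 : (0 : ℝ) < L := by exact_mod_cast hL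
  obtain ⟨r', hr', hr'u⟩ := exists_between ((lt_div_iff₀ hu0).2 ((lt_div_iff₀' hr).1 hu))
  have hr'0 : 0 < r' := hr.trans hr'
  have hur' : u * r' / L < 1 := by rw [div_lt_one hL0]; exact (lt_div_iff₀' hu0).1 hr'u
  filter_upwards [eventually_gt_atTop L, (tendsto_choose_mul_gammaMeasure_Iic_pow ha hr hr' hL)
    |>.eventually (ge_mem_nhds (sub_pos.2 hur'))] with N hLN hN
  calc u * log N = L * (log N / r') * (u * r' / L) := by field_simp
    _ ≤ L * (log N / r') * (1 - N.choose (N - L + 1)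
          * (gammaMeasure a r).real (Set.Iic (log N / r')) ^ (N - L + 1)) := by
        have := log_natCast_nonneg N
        gcongr
        linarith
    _ ≤ ∫ ω, topSum L (fun n => W N n ω) ∂(P N) :=
        le_integral_topSum hLN.le ha hr (hmeas N hLN) (hindep N hLN) (hdist N hLN)
          (div_nonneg (log_natCast_nonneg N) hr'0.le)

end Family

theorem stmt3
    (m : ℝ) (hm : 1 / 2 ≤ m)
    (L : ℕ) (hL : 1 ≤ L)
    (Ω : ℕ → Type) [∀ N, MeasurableSpace (Ω N)]
    (P : ∀ N, Measure (Ω N)) [∀ N, IsProbabilityMeasure (P N)]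
    (W : ∀ N : ℕ, Fin N → Ω N → ℝ)
    (hmeas : ∀ N : ℕ, L < N → ∀ n : Fin N, Measurable (W N n))
    (hindep : ∀ N : ℕ, L < N →
      iIndepFun (W N) (P N))
    (hdist : ∀ N : ℕ, L < N → ∀ n : Fin N,
      (P N).map (W N n) = gammaMeasure m m) :
    Tendsto
      (fun N : ℕ =>
        (∫ ω, topSum L (fun n => W N n ω) ∂(P N)) / (((L : ℝ) / m) * Real.log N))
      atTop (nhds 1) := by
  have hm0 : 0 < m := by linarith
  have hL0 : (0 : ℝ) < L := by exact_mod_cast hL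
  exact tendsto_div_const_mul_of_eventually_le (by positivity)
    ((tendsto_log_atTop.comp tendsto_natCast_atTop_atTop).eventually_gt_atTop 0)
    (fun u hu => eventually_integral_topSum_le hm0 hm0 hmeas hdist hu)
    (fun u hu0 hu => eventually_mul_log_le_integral_topSum hm0 hm0 hL hmeas hindep hdist hu0 hu)
end

section
/- Let K ≥ 1 and L ≥ 1 be fixed integers, ρ > 0, and for each k ∈ {1, …, K} let β_k > 0 and m_k ≥ 1/2. For each N > L, let {W_{n,k,N} : 1 ≤ n ≤ N, 1 ≤ k ≤ K} be independent real random variables, where W_{n,k,N} has the normalized Gamma(m_k) distribution, let T_{k,N} be the top-L sum of (W_{1,k,N}, …, W_{N,k,N}), and set R_N := Σ_{k=1}^K log₂(1 + ρ β_k T_{k,N}). Then R_N divided by its deterministic equivalent Σ_{k=1}^K log₂(1 + ρ β_k (L/m_k) log N) converges to 1 in probability as N → ∞. -/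
/-!
The top-`L` sum `T` of `N` i.i.d. `Gamma(m, m)` values concentrates within a factor `2` of
`(L / m) log N`. By a union bound, `T > 2 (L / m) log N` has probability at most
`N P(W > 2 log N / m) = O(N^(-1/2))`. Splitting the indices into `L` disjoint blocks of size
`⌊N / L⌋`, `T < (L / 2m) log N` forces some block to lie entirely below `log N / (2m)`, which by
independence has probability at most `L (1 - c N^(-3/4))^⌊N / L⌋ → 0`. Both tail estimates come
from comparing the density `x^(a-1) e^(-r x)` with `e^(-κ x)` for `κ` slightly below or above `r`.
On the good event every rate `log₂ (1 + ρ β_k T_k)` is within `1` of its deterministic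
equivalent, whose sum tends to infinity, so the ratio tends to `1`.
-/

open MeasureTheory ProbabilityTheory Filter Real

open Set
open scoped Nat ENNReal Topology

lemma rpow_le_mul_exp (p : ℝ) {δ : ℝ} (hδ : 0 < δ) :
    ∃ C > 0, ∀ x, 1 ≤ x → x ^ p ≤ C * exp (δ * x) := by
  refine ⟨(⌈p⌉₊)! / δ ^ ⌈p⌉₊, by positivity, fun x hx => ?_⟩
  have hδx := pow_div_factorial_le_exp _ (mul_nonneg hδ.le (zero_le_one.trans hx)) ⌈p⌉₊
  calc x ^ p ≤ x ^ (⌈p⌉₊ : ℝ) := rpow_le_rpow_of_exponent_le hx (Nat.le_ceil p)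
    _ = (⌈p⌉₊)! / δ ^ ⌈p⌉₊ * ((δ * x) ^ ⌈p⌉₊ / (⌈p⌉₊)!) := by
      rw [rpow_natCast, mul_pow]; field_simp
    _ ≤ _ := by gcongr

lemma lintegral_Ioi_ofReal_mul_exp_neg_mul {κ C : ℝ} (hκ : 0 < κ) (hC : 0 ≤ C) (t : ℝ) :
    ∫⁻ x in Ioi t, ENNReal.ofReal (C * exp (-(κ * x))) =
      ENNReal.ofReal (C * exp (-(κ * t)) / κ) := by
  have hexp (x : ℝ) : exp (-(κ * x)) = exp (-κ * x) := by rw [neg_mul]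
  simp_rw [hexp]
  rw [← ofReal_integral_eq_lintegral_ofReal
      ((integrableOn_exp_mul_Ioi (neg_lt_zero.2 hκ) t).const_mul C)
      (ae_of_all _ fun x => by positivity),
    integral_const_mul, integral_exp_mul_Ioi (neg_lt_zero.2 hκ)]
  congr 1
  field_simp

section GammaTail

variable {a r κ : ℝ}

lemma gammaMeasure_Ioi_le (ha : 0 < a) (hκ : 0 < κ) (hκr : κ < r) :
    ∃ C, ∀ t, 1 ≤ t → gammaMeasure a r (Ioi t) ≤ ENNReal.ofReal (C * exp (-(κ * t))) := by
  obtain ⟨C, hC0, hC⟩ := rpow_le_mul_exp (a - 1) (sub_pos.2 hκr)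
  have hr : 0 < r := hκ.trans hκr
  have hΓ := Gamma_pos_of_pos ha
  refine ⟨r ^ a / Gamma a * C / κ, fun t ht => ?_⟩
  have hdens : ∀ x ∈ Ioi t,
      gammaPDF a r x ≤ ENNReal.ofReal (r ^ a / Gamma a * C * exp (-(κ * x))) := by
    intro x hx
    have hx1 : 1 ≤ x := ht.trans (le_of_lt hx)
    rw [gammaPDF_of_nonneg (zero_le_one.trans hx1)]
    refine ENNReal.ofReal_le_ofReal ?_
    calc r ^ a / Gamma a * x ^ (a - 1) * exp (-(r * x))
        ≤ r ^ a / Gamma a * (C * exp ((r - κ) * x)) * exp (-(r * x)) := by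
          gcongr; exact hC x hx1
      _ = r ^ a / Gamma a * C * exp ((r - κ) * x + -(r * x)) := by rw [exp_add]; ring
      _ = r ^ a / Gamma a * C * exp (-(κ * x)) := by ring_nf
  calc gammaMeasure a r (Ioi t) = ∫⁻ x in Ioi t, gammaPDF a r x :=
        withDensity_apply _ measurableSet_Ioi
    _ ≤ _ := setLIntegral_mono' measurableSet_Ioi hdens
    _ = _ := by rw [lintegral_Ioi_ofReal_mul_exp_neg_mul hκ (by positivity)]; ring_nf

lemma le_gammaMeasure_Ioi (ha : 0 < a) (hr : 0 < r) (hrκ : r < κ) :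
    ∃ c > 0, ∀ t, 1 ≤ t → ENNReal.ofReal (c * exp (-(κ * t))) ≤ gammaMeasure a r (Ioi t) := by
  obtain ⟨C, hC0, hC⟩ := rpow_le_mul_exp (1 - a) (sub_pos.2 hrκ)
  have hκ : 0 < κ := hr.trans hrκ
  have hΓ := Gamma_pos_of_pos ha
  refine ⟨r ^ a / Gamma a / C / κ, by positivity, fun t ht => ?_⟩
  have hdens : ∀ x ∈ Ioi t,
      ENNReal.ofReal (r ^ a / Gamma a / C * exp (-(κ * x))) ≤ gammaPDF a r x := by
    intro x hx
    have hx1 : 1 ≤ x := ht.trans (le_of_lt hx)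
    have hx0 : 0 < x := zero_lt_one.trans_le hx1
    rw [gammaPDF_of_nonneg hx0.le]
    refine ENNReal.ofReal_le_ofReal ?_
    have hpow : (C * exp ((κ - r) * x))⁻¹ ≤ x ^ (a - 1) := by
      rw [show a - 1 = -(1 - a) by ring, rpow_neg hx0.le]
      exact inv_anti₀ (by positivity) (hC x hx1)
    calc r ^ a / Gamma a / C * exp (-(κ * x))
        = r ^ a / Gamma a / C * exp (-((κ - r) * x) + -(r * x)) := by ring_nf
      _ = r ^ a / Gamma a * (C * exp ((κ - r) * x))⁻¹ * exp (-(r * x)) := by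
          rw [exp_add, exp_neg]; ring
      _ ≤ r ^ a / Gamma a * x ^ (a - 1) * exp (-(r * x)) := by gcongr
  calc ENNReal.ofReal (r ^ a / Gamma a / C / κ * exp (-(κ * t)))
      = ∫⁻ x in Ioi t, ENNReal.ofReal (r ^ a / Gamma a / C * exp (-(κ * x))) := by
        rw [lintegral_Ioi_ofReal_mul_exp_neg_mul hκ (by positivity)]; ring_nf
    _ ≤ ∫⁻ x in Ioi t, gammaPDF a r x := setLIntegral_mono' measurableSet_Ioi hdens
    _ = gammaMeasure a r (Ioi t) := (withDensity_apply _ measurableSet_Ioi).symm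

end GammaTail

section TopSum

variable {N L : ℕ} {w : Fin N → ℝ}

lemma le_topSum (S : Finset (Fin N)) (hS : S.card = L) : ∑ n ∈ S, w n ≤ topSum L w := by
  refine le_csSup ?_ ⟨S, hS, rfl⟩
  refine (Set.finite_range fun S : Finset (Fin N) => ∑ n ∈ S, w n).bddAbove.mono ?_
  rintro x ⟨S, -, rfl⟩
  exact ⟨S, rfl⟩

lemma topSum_le_card_mul (hLN : L ≤ N) {t : ℝ} (ht : ∀ n, w n ≤ t) : topSum L w ≤ L * t := by
  obtain ⟨S, -, hS⟩ := Finset.exists_subset_card_eq (s := (Finset.univ : Finset (Fin N)))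
    (n := L) (by simpa using hLN)
  refine csSup_le ⟨_, S, hS, rfl⟩ ?_
  rintro x ⟨S', hS', rfl⟩
  calc ∑ n ∈ S', w n ≤ ∑ _n ∈ S', t := Finset.sum_le_sum fun n _ => ht n
    _ = L * t := by rw [Finset.sum_const, hS', nsmul_eq_mul]

lemma card_mul_le_topSum {t : ℝ} {T : Finset (Fin N)} (hT : L ≤ T.card)
    (ht : ∀ n ∈ T, t ≤ w n) : L * t ≤ topSum L w := by
  obtain ⟨S, hST, hS⟩ := Finset.exists_subset_card_eq hT
  calc (L : ℝ) * t = ∑ _n ∈ S, t := by rw [Finset.sum_const, hS, nsmul_eq_mul]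
    _ ≤ ∑ n ∈ S, w n := Finset.sum_le_sum fun n hn => ht n (hST hn)
    _ ≤ topSum L w := le_topSum S hS

end TopSum

section TopSumDeviation

variable {Ω : Type*} [MeasurableSpace Ω] {P : Measure Ω} {μ : Measure ℝ} [NeZero μ]
  {N L : ℕ} {X : Fin N → Ω → ℝ}

lemma measure_preimage_eq_of_map_eq {Y : Ω → ℝ} (hY : P.map Y = μ) {S : Set ℝ}
    (hS : MeasurableSet S) : P (Y ⁻¹' S) = μ S := by
  have hYm : AEMeasurable Y P := .of_map_ne_zero (hY ▸ NeZero.ne μ)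
  rw [← hY, Measure.map_apply_of_aemeasurable hYm hS]

lemma measure_card_mul_lt_topSum_le (hLN : L ≤ N) (hX : ∀ n, P.map (X n) = μ) (t : ℝ) :
    P {ω | L * t < topSum L (X · ω)} ≤ N * μ (Ioi t) := by
  have hsub : {ω | L * t < topSum L (X · ω)} ⊆ ⋃ n, X n ⁻¹' Ioi t := by
    intro ω hω
    contrapose! hω
    simp only [mem_iUnion, mem_preimage, mem_Ioi, not_exists, not_lt] at hω
    exact not_lt.2 (topSum_le_card_mul hLN hω)
  calc P _ ≤ ∑ n, P (X n ⁻¹' Ioi t) := (measure_mono hsub).trans (measure_iUnion_fintype_le _ _)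
    _ = N * μ (Ioi t) := by
      simp [measure_preimage_eq_of_map_eq (hX _) measurableSet_Ioi]

lemma measure_topSum_lt_card_mul_le (hindep : iIndepFun X P) (hX : ∀ n, P.map (X n) = μ)
    (t : ℝ) : P {ω | topSum L (X · ω) < L * t} ≤ L * μ (Iio t) ^ (N / L) := by
  let block : Fin L × Fin (N / L) → Fin N := fun p =>
    Fin.castLE (Nat.mul_div_le N L) (finProdFinEquiv p)
  have hblock : Function.Injective block := (Fin.castLE_injective _).comp finProdFinEquiv.injective
  have hsub : {ω | topSum L (X · ω) < L * t} ⊆ ⋃ j, ⋂ i, X (block (j, i)) ⁻¹' Iio t := by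
    intro ω hω
    contrapose! hω
    simp only [mem_iUnion, mem_iInter, mem_preimage, mem_Iio, not_exists, not_forall,
      not_lt] at hω
    choose f hf using hω
    refine not_lt.2 (card_mul_le_topSum (T := Finset.univ.image fun j => block (j, f j)) ?_ ?_)
    · have hinj : Function.Injective fun j => block (j, f j) :=
        hblock.comp (f := fun j => (j, f j)) fun j j' h => congrArg Prod.fst h
      simp [Finset.card_image_of_injective _ hinj]
    · simpa using hf
  have hblock_meas (j : Fin L) : P (⋂ i, X (block (j, i)) ⁻¹' Iio t) = μ (Iio t) ^ (N / L) := by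
    rw [(hindep.precomp (g := fun i => block (j, i))
      (hblock.comp (Prod.mk_right_injective j))).meas_iInter
      fun i => ⟨Iio t, measurableSet_Iio, rfl⟩]
    simp [measure_preimage_eq_of_map_eq (hX _) measurableSet_Iio]
  calc P _ ≤ ∑ j, P (⋂ i, X (block (j, i)) ⁻¹' Iio t) :=
        (measure_mono hsub).trans (measure_iUnion_fintype_le _ _)
    _ = L * μ (Iio t) ^ (N / L) := by simp [hblock_meas]

end TopSumDeviation

lemma measure_compl_pow_le_exp {α : Type*} [MeasurableSpace α] {μ : Measure α}
    [IsProbabilityMeasure μ] {A : Set α} (hA : MeasurableSet A) {q : ℝ} (hq : 0 ≤ q)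
    (hqA : ENNReal.ofReal q ≤ μ A) (s : ℕ) : μ Aᶜ ^ s ≤ ENNReal.ofReal (exp (-(s * q))) := by
  have hq1 : q ≤ 1 := ENNReal.ofReal_le_one.1 (hqA.trans prob_le_one)
  have hcompl : μ Aᶜ ≤ ENNReal.ofReal (1 - q) := by
    rw [prob_compl_eq_one_sub hA, ENNReal.ofReal_sub _ hq, ENNReal.ofReal_one]
    exact tsub_le_tsub_left hqA 1
  calc μ Aᶜ ^ s ≤ ENNReal.ofReal (1 - q) ^ s := by gcongr
    _ = ENNReal.ofReal ((1 - q) ^ s) := (ENNReal.ofReal_pow (by linarith) s).symm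
    _ ≤ ENNReal.ofReal (exp (-q) ^ s) := by
      gcongr
      linarith [add_one_le_exp (-q)]
    _ = ENNReal.ofReal (exp (-(s * q))) := by rw [← exp_nat_mul, mul_neg]

lemma div_two_mul_le_natCast_div {N L : ℕ} (hL : 0 < L) (hLN : L ≤ N) :
    (N : ℝ) / (2 * L) ≤ (N / L : ℕ) := by
  have h1 := Nat.div_add_mod N L
  have h2 := Nat.mod_lt N hL
  have h3 : 1 ≤ N / L := Nat.div_pos hLN hL
  have h4 : N ≤ N / L * (2 * L) := by nlinarith
  rw [div_le_iff₀ (by positivity)]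
  exact_mod_cast h4

lemma tendsto_log_natCast_atTop : Tendsto (fun N : ℕ => log N) atTop atTop :=
  tendsto_log_atTop.comp tendsto_natCast_atTop_atTop

section GammaAsymptotics

variable {a r : ℝ}

lemma tendsto_natCast_mul_gammaMeasure_Ioi (ha : 0 < a) (hr : 0 < r) :
    Tendsto (fun N : ℕ => (N : ℝ≥0∞) * gammaMeasure a r (Ioi (2 * log N / r))) atTop (𝓝 0) := by
  obtain ⟨C, hC⟩ := gammaMeasure_Ioi_le ha (κ := 3 * r / 4) (r := r) (by positivity) (by linarith)
  have hlim : Tendsto (fun N : ℕ => C * exp (-(log N / 2))) atTop (𝓝 0) := by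
    simpa using ((tendsto_exp_atBot.comp (tendsto_neg_atTop_atBot.comp
      (tendsto_log_natCast_atTop.atTop_div_const two_pos))).const_mul C)
  refine tendsto_nhds_bot_mono (by simpa using ENNReal.tendsto_ofReal hlim) ?_
  filter_upwards [((tendsto_log_natCast_atTop.const_mul_atTop two_pos).atTop_div_const
    hr).eventually_ge_atTop 1, eventually_gt_atTop 0] with N ht hN
  have hexp : (N : ℝ) * (C * exp (-(3 * r / 4 * (2 * log N / r)))) = C * exp (-(log N / 2)) := by
    have : -(3 * r / 4 * (2 * log N / r)) = -log N + -(log N / 2) := by field_simp; ring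
    rw [this, exp_add, exp_neg (log N), exp_log (Nat.cast_pos.2 hN)]
    field_simp
  calc (N : ℝ≥0∞) * gammaMeasure a r (Ioi (2 * log N / r))
      ≤ N * ENNReal.ofReal (C * exp (-(3 * r / 4 * (2 * log N / r)))) := by gcongr; exact hC _ ht
    _ = ENNReal.ofReal (C * exp (-(log N / 2))) := by
      rw [← ENNReal.ofReal_natCast, ← ENNReal.ofReal_mul (Nat.cast_nonneg _), hexp]

lemma tendsto_gammaMeasure_Iio_pow (ha : 0 < a) (hr : 0 < r) {L : ℕ} (hL : 0 < L) :
    Tendsto (fun N : ℕ => gammaMeasure a r (Iio (log N / (2 * r))) ^ (N / L)) atTop (𝓝 0) := by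
  have := isProbabilityMeasure_gammaMeasure ha hr
  obtain ⟨c, hc0, hc⟩ := le_gammaMeasure_Ioi ha hr (κ := 3 * r / 2) (by linarith)
  have hlim : Tendsto (fun N : ℕ => exp (-(c / (2 * L) * exp (log N / 4)))) atTop (𝓝 0) :=
    tendsto_exp_atBot.comp (tendsto_neg_atTop_atBot.comp ((tendsto_exp_atTop.comp
      (tendsto_log_natCast_atTop.atTop_div_const four_pos)).const_mul_atTop (by positivity)))
  refine tendsto_nhds_bot_mono (by simpa using ENNReal.tendsto_ofReal hlim) ?_
  filter_upwards [(tendsto_log_natCast_atTop.atTop_div_const (by positivity : 0 < 2 * r)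
    ).eventually_ge_atTop 1, eventually_ge_atTop L] with N ht hLN
  have hN : (0 : ℝ) < N := by exact_mod_cast hL.trans_le hLN
  have hexp : exp (log N / 4) = N * exp (-(3 * r / 2 * (log N / (2 * r)))) := by
    rw [← exp_log hN, ← exp_add, log_exp]
    congr 1
    field_simp
    ring
  calc gammaMeasure a r (Iio (log N / (2 * r))) ^ (N / L)
      ≤ ENNReal.ofReal (exp (-((N / L : ℕ) * (c * exp (-(3 * r / 2 * (log N / (2 * r)))))))) := by
        rw [← compl_Ici]
        exact measure_compl_pow_le_exp measurableSet_Ici (by positivity)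
          ((hc _ ht).trans (measure_mono Ioi_subset_Ici_self)) _
    _ ≤ ENNReal.ofReal (exp (-(c / (2 * L) * exp (log N / 4)))) := by
      refine ENNReal.ofReal_le_ofReal (exp_le_exp.2 (neg_le_neg ?_))
      calc c / (2 * L) * exp (log N / 4)
          = N / (2 * L) * (c * exp (-(3 * r / 2 * (log N / (2 * r))))) := by rw [hexp]; ring
        _ ≤ _ := by gcongr; exact div_two_mul_le_natCast_div hL hLN

end GammaAsymptotics

lemma tendsto_measure_topSum_notMem_Icc {a r : ℝ} (ha : 0 < a) (hr : 0 < r) {L : ℕ}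
    (hL : 0 < L) {Ω : ℕ → Type*} [∀ N, MeasurableSpace (Ω N)] {P : ∀ N, Measure (Ω N)}
    {X : ∀ N, Fin N → Ω N → ℝ} (hindep : ∀ᶠ N in atTop, iIndepFun (X N) (P N))
    (hX : ∀ᶠ N in atTop, ∀ n, (P N).map (X N n) = gammaMeasure a r) :
    Tendsto (fun N : ℕ => P N {ω | topSum L (X N · ω) ∉
      Icc (L / r * log N / 2) (2 * (L / r * log N))}) atTop (𝓝 0) := by
  have := isProbabilityMeasure_gammaMeasure ha hr
  have hlim := (ENNReal.Tendsto.const_mul (tendsto_gammaMeasure_Iio_pow ha hr hL)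
    (Or.inr (ENNReal.natCast_ne_top L))).add (tendsto_natCast_mul_gammaMeasure_Ioi ha hr)
  rw [mul_zero, add_zero] at hlim
  refine tendsto_nhds_bot_mono hlim ?_
  filter_upwards [hindep, hX, eventually_ge_atTop L] with N hindepN hXN hLN
  have hlow : L / r * log N / 2 = L * (log N / (2 * r)) := by field_simp
  have hup : 2 * (L / r * log N) = L * (2 * log N / r) := by field_simp
  calc P N {ω | topSum L (X N · ω) ∉ Icc (L / r * log N / 2) (2 * (L / r * log N))}
      ≤ P N ({ω | topSum L (X N · ω) < L * (log N / (2 * r))} ∪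
          {ω | L * (2 * log N / r) < topSum L (X N · ω)}) := by
        refine measure_mono fun ω (hω : ¬(_ ∧ _)) => ?_
        rw [hlow, hup, not_and_or, not_le, not_le] at hω
        exact hω
    _ ≤ _ := (measure_union_le _ _).trans (add_le_add
        (measure_topSum_lt_card_mul_le hindepN hXN _)
        (measure_card_mul_lt_topSum_le hLN hXN _))

lemma logb_two_one_add_le_add_one {x y : ℝ} (hy : 0 ≤ y) (hyx : y ≤ 2 * x) :
    logb 2 (1 + y) ≤ logb 2 (1 + x) + 1 := by
  calc logb 2 (1 + y) ≤ logb 2 (2 * (1 + x)) :=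
        logb_le_logb_of_le one_lt_two (by linarith) (by linarith)
    _ = logb 2 (1 + x) + 1 := by
      rw [logb_mul two_ne_zero (by linarith), logb_self_eq_one one_lt_two, add_comm]

lemma abs_logb_two_one_add_mul_sub_le_one {c g T : ℝ} (hc : 0 ≤ c) (hT : T ∈ Icc (g / 2) (2 * g)) :
    |logb 2 (1 + c * T) - logb 2 (1 + c * g)| ≤ 1 := by
  obtain ⟨hgT, hTg⟩ := hT
  have hg : 0 ≤ g := by linarith
  rw [abs_sub_le_iff]
  constructor
  · linarith [logb_two_one_add_le_add_one (x := c * g) (y := c * T)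
      (mul_nonneg hc (by linarith)) (by nlinarith)]
  · linarith [logb_two_one_add_le_add_one (x := c * T) (y := c * g)
      (mul_nonneg hc hg) (by nlinarith)]

lemma abs_sum_div_sum_sub_one_lt {ι : Type*} [Fintype ι] {f g : ι → ℝ} {ε : ℝ} (hε : 0 < ε)
    (hfg : ∀ i, |f i - g i| ≤ 1) (hg : Fintype.card ι / ε < ∑ i, g i) :
    |(∑ i, f i) / (∑ i, g i) - 1| < ε := by
  have hpos : 0 < ∑ i, g i := lt_of_le_of_lt (by positivity) hg
  have hdiff : |∑ i, f i - ∑ i, g i| ≤ Fintype.card ι := by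
    rw [← Finset.sum_sub_distrib]
    refine (Finset.abs_sum_le_sum_abs _ _).trans ?_
    simpa using Finset.sum_le_sum fun i (_ : i ∈ Finset.univ) => hfg i
  rw [div_sub_one hpos.ne', abs_div, abs_of_pos hpos, div_lt_iff₀ hpos]
  rw [div_lt_iff₀ hε] at hg
  linarith

lemma tendsto_sum_logb_two_one_add_mul_log {ι : Type*} [Fintype ι] [Nonempty ι] {c : ι → ℝ}
    (hc : ∀ i, 0 < c i) :
    Tendsto (fun N : ℕ => ∑ i, logb 2 (1 + c i * log N)) atTop atTop := by
  obtain ⟨i₀⟩ := ‹Nonempty ι›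
  have hterm (i : ι) : Tendsto (fun N : ℕ => logb 2 (1 + c i * log N)) atTop atTop :=
    (tendsto_logb_atTop one_lt_two).comp
      (tendsto_atTop_add_const_left _ 1 (tendsto_log_natCast_atTop.const_mul_atTop (hc i)))
  refine tendsto_atTop_mono (fun N => Finset.single_le_sum (fun i _ => ?_) (Finset.mem_univ i₀))
    (hterm i₀)
  exact logb_nonneg one_lt_two
    (le_add_of_nonneg_right (mul_nonneg (hc i).le (log_natCast_nonneg N)))

theorem stmt5_general
    (K L : ℕ) (hK : 1 ≤ K) (hL : 1 ≤ L)
    (ρ : ℝ) (hρ : 0 < ρ)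
    (β m : Fin K → ℝ) (hβ : ∀ k, 0 < β k) (hm : ∀ k, 1 / 2 ≤ m k)
    (Ω : ℕ → Type) [∀ N, MeasurableSpace (Ω N)]
    (P : ∀ N, Measure (Ω N))
    (W : ∀ N : ℕ, Fin N × Fin K → Ω N → ℝ)
    (hindep : ∀ N : ℕ, L < N →
      iIndepFun (W N) (P N))
    (hdist : ∀ N : ℕ, L < N → ∀ p : Fin N × Fin K,
      (P N).map (W N p) = gammaMeasure (m p.2) (m p.2)) :
    ∀ ε : ℝ, 0 < ε →
      Tendsto
        (fun N : ℕ =>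
          (P N) {ω | ε ≤
            |(∑ k : Fin K,
                Real.logb 2 (1 + ρ * β k * topSum L (fun n => W N (n, k) ω))) /
              (∑ k : Fin K,
                Real.logb 2 (1 + ρ * β k * ((L : ℝ) / m k) * Real.log N)) - 1|})
        atTop (nhds 0) := by
  intro ε hε
  have hm0 (k : Fin K) : 0 < m k := by linarith [hm k]
  have : Nonempty (Fin K) := ⟨⟨0, hK⟩⟩
  have hband (k : Fin K) := tendsto_measure_topSum_notMem_Icc (hm0 k) (hm0 k) hL
    (X := fun N n => W N (n, k))
    ((eventually_gt_atTop L).mono fun N hN => (hindep N hN).precomp (Prod.mk_left_injective k))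
    ((eventually_gt_atTop L).mono fun N hN n => hdist N hN (n, k))
  have hdet := tendsto_sum_logb_two_one_add_mul_log (c := fun k => ρ * β k * (L / m k))
    fun k => mul_pos (mul_pos hρ (hβ k)) (div_pos (Nat.cast_pos.2 hL) (hm0 k))
  have hsum := tendsto_finsetSum Finset.univ fun k _ => hband k
  rw [Finset.sum_const_zero] at hsum
  refine tendsto_nhds_bot_mono hsum ?_
  filter_upwards [hdet.eventually_gt_atTop (K / ε)] with N hN
  refine (measure_mono fun ω hω => ?_).trans (measure_iUnion_fintype_le _ _)
  contrapose hω
  simp only [mem_iUnion, not_exists] at hω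
  refine not_le.2 (abs_sum_div_sum_sub_one_lt hε (fun k => ?_) (by simpa using hN))
  simpa only [mul_assoc] using
    abs_logb_two_one_add_mul_sub_le_one (mul_pos hρ (hβ k)).le (not_not.1 (hω k))

theorem stmt5
    (K L : ℕ) (hK : 1 ≤ K) (hL : 1 ≤ L)
    (ρ : ℝ) (hρ : 0 < ρ)
    (β m : Fin K → ℝ) (hβ : ∀ k, 0 < β k) (hm : ∀ k, 1 / 2 ≤ m k)
    (Ω : ℕ → Type) [∀ N, MeasurableSpace (Ω N)]
    (P : ∀ N, Measure (Ω N)) [∀ N, IsProbabilityMeasure (P N)]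
    (W : ∀ N : ℕ, Fin N × Fin K → Ω N → ℝ)
    (hmeas : ∀ N : ℕ, L < N → ∀ p : Fin N × Fin K, Measurable (W N p))
    (hindep : ∀ N : ℕ, L < N →
      iIndepFun (W N) (P N))
    (hdist : ∀ N : ℕ, L < N → ∀ p : Fin N × Fin K,
      (P N).map (W N p) = gammaMeasure (m p.2) (m p.2)) :
    ∀ ε : ℝ, 0 < ε →
      Tendsto
        (fun N : ℕ =>
          (P N) {ω | ε ≤
            |(∑ k : Fin K,
                Real.logb 2 (1 + ρ * β k * topSum L (fun n => W N (n, k) ω))) /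
              (∑ k : Fin K,
                Real.logb 2 (1 + ρ * β k * ((L : ℝ) / m k) * Real.log N)) - 1|})
        atTop (nhds 0) :=
  stmt5_general K L hK hL ρ hρ β m hβ hm Ω P W hindep hdist
end

section
/- Let m > 0 and let L ≥ 1 be a fixed integer. For N > L, let υ_N > 0 be the unique solution of G(m, m υ_N) = (L/N) · Γ(m), and define μ_N := N · G(m+1, m υ_N)/(m Γ(m)), σ̄_N² := N · G(m+2, m υ_N)/(L m² Γ(m)) − μ_N²/L², and σ_N² := L·(σ̄_N² + (υ_N − μ_N/L)²·(1 − L/N)), where G(s, x) := ∫_x^∞ t^{s−1} e^{−t} dt and Γ(m) = G(m, 0). Then σ_N²/(L² υ_N²) → 0 as N → ∞; consequently σ_N²/μ_N² → 0 as N → ∞. -/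
open Filter

/-- The (real) upper incomplete gamma function `G(s, x) = ∫ₓ^∞ t^(s-1) e^(-t) dt`. -/
noncomputable def upperGamma (s x : ℝ) : ℝ :=
  ∫ t in Set.Ioi x, t ^ (s - 1) * Real.exp (-t)

open MeasureTheory Set Real Topology

/-!
Write `x = m υ_N` and `r = x^m e^{-x} / G(m, x)`. The recurrence `G(s+1, x) = x^s e^{-x} + s G(s, x)`
turns `μ_N`, `σ̄_N²` and `σ_N²` into rational functions of `x` and `r`:
`σ_N² / (L² υ_N²) = (x r + (m+1)(r+m) - (r+m)² + (r+m-x)² (1 - L/N)) / (L x²)`.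
The elementary bounds `x - m ≤ r ≤ x + 1` make the numerator `O(x)`, while
`G(m, x) = (L/N) Γ(m) → 0` forces `x → ∞`. Finally `r ≥ x - m` also gives `μ_N ≥ L υ_N`, so the
second ratio is dominated by the first.
-/

section UpperGamma

variable {s x : ℝ}

theorem integrableOn_upperGamma_integrand (s : ℝ) (hx : 0 < x) :
    IntegrableOn (fun t : ℝ => t ^ (s - 1) * exp (-t)) (Ioi x) := by
  refine integrable_of_isBigO_exp_neg one_half_pos ?_ ?_
  · exact (continuousOn_id.rpow_const fun t ht => Or.inl (hx.trans_le ht).ne').mul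
      continuousOn_id.neg.rexp
  · simpa only [mul_comm] using (Gamma_integrand_isLittleO (s - 1)).isBigO

theorem upperGamma_nonneg (s : ℝ) (hx : 0 ≤ x) : 0 ≤ upperGamma s x :=
  setIntegral_nonneg measurableSet_Ioi fun _ ht =>
    mul_nonneg (rpow_nonneg (hx.trans (le_of_lt ht)) _) (exp_pos _).le

theorem antitoneOn_upperGamma (s : ℝ) : AntitoneOn (upperGamma s) (Ioi 0) := by
  intro a ha b _ hab
  refine setIntegral_mono_set (integrableOn_upperGamma_integrand s ha) ?_
    (Ioi_subset_Ioi hab).eventuallyLE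
  filter_upwards [ae_restrict_mem measurableSet_Ioi] with t ht
  exact mul_nonneg (rpow_nonneg (ha.out.trans ht).le _) (exp_pos _).le

theorem upperGamma_add_one (s : ℝ) (hx : 0 < x) :
    upperGamma (s + 1) x = x ^ s * exp (-x) + s * upperGamma s x := by
  have hderiv : ∀ t ∈ Ioi x, HasDerivAt (fun t : ℝ => t ^ s * exp (-t))
      (s * (t ^ (s - 1) * exp (-t)) - t ^ s * exp (-t)) t := by
    intro t ht
    refine ((hasDerivAt_rpow_const (p := s) (Or.inl (hx.trans ht).ne')).mul
      (hasDerivAt_neg t).exp).congr_deriv ?_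
    ring
  have hint := integrableOn_upperGamma_integrand s hx
  have hint₁ := integrableOn_upperGamma_integrand (s + 1) hx
  simp only [add_sub_cancel_right] at hint₁
  have hcont : ContinuousWithinAt (fun t : ℝ => t ^ s * exp (-t)) (Ici x) x :=
    ((continuousAt_rpow_const _ _ (Or.inl hx.ne')).mul
      (continuous_neg.rexp.continuousAt)).continuousWithinAt
  have hlim : Tendsto (fun t : ℝ => t ^ s * exp (-t)) atTop (𝓝 0) := by
    simpa using tendsto_rpow_mul_exp_neg_mul_atTop_nhds_zero s 1 one_pos
  have key := integral_Ioi_of_hasDerivAt_of_tendsto hcont hderiv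
    ((hint.const_mul s).sub hint₁) hlim
  rw [integral_sub (hint.const_mul s) hint₁, integral_const_mul] at key
  simp only [upperGamma, add_sub_cancel_right]
  linarith

theorem mul_upperGamma_le_upperGamma_add_one (s : ℝ) (hx : 0 < x) :
    x * upperGamma s x ≤ upperGamma (s + 1) x := by
  have hint₁ := integrableOn_upperGamma_integrand (s + 1) hx
  rw [upperGamma, upperGamma, ← integral_const_mul]
  refine setIntegral_mono_on ((integrableOn_upperGamma_integrand s hx).const_mul x) hint₁
    measurableSet_Ioi fun t ht => ?_
  have ht₀ : 0 < t := hx.trans ht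
  rw [add_sub_cancel_right, ← mul_assoc, rpow_sub_one ht₀.ne']
  calc x * (t ^ s / t) * exp (-t) ≤ t * (t ^ s / t) * exp (-t) := by gcongr; exact le_of_lt ht
    _ = t ^ s * exp (-t) := by field_simp

/-- Integrating by parts once more, `x G(s,x) = x^s e^{-x} + (s-1) x G(s-1,x)`, and the last
term is either nonnegative (`s ≥ 1`) or at least `(s-1) G(s,x)` (`s < 1`). -/
theorem rpow_mul_exp_neg_le_add_one_mul_upperGamma (hs : 0 ≤ s) (hx : 0 < x) :
    x ^ s * exp (-x) ≤ (x + 1) * upperGamma s x := by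
  have hrec := upperGamma_add_one (s - 1) hx
  have hmul := mul_upperGamma_le_upperGamma_add_one (s - 1) hx
  rw [sub_add_cancel] at hrec hmul
  have hx_mul : x * upperGamma s x
      = x ^ s * exp (-x) + (s - 1) * (x * upperGamma (s - 1) x) := by
    rw [hrec, rpow_sub_one hx.ne']
    field_simp
  have hG := upperGamma_nonneg s hx.le
  rcases le_or_gt 1 s with h1 | h1
  · have := mul_nonneg (sub_nonneg.2 h1) (mul_nonneg hx.le (upperGamma_nonneg (s - 1) hx.le))
    linarith
  · have := mul_le_mul_of_nonpos_left hmul (sub_nonpos.2 h1.le)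
    linarith [mul_nonneg hs hG]

theorem upperGamma_pos (hs : 0 ≤ s) (hx : 0 < x) : 0 < upperGamma s x :=
  pos_of_mul_pos_right ((mul_pos (rpow_pos_of_pos hx s) (exp_pos _)).trans_le
    (rpow_mul_exp_neg_le_add_one_mul_upperGamma hs hx)) (by linarith)

theorem tendsto_atTop_of_tendsto_upperGamma_zero {α : Type*} {l : Filter α} {f : α → ℝ}
    (hs : 0 ≤ s) (hf : ∀ᶠ a in l, 0 < f a)
    (h : Tendsto (fun a => upperGamma s (f a)) l (𝓝 0)) : Tendsto f l atTop := by
  refine tendsto_atTop.2 fun M => ?_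
  have hM : 0 < max M 1 := lt_max_of_lt_right one_pos
  filter_upwards [hf, h.eventually_lt_const (upperGamma_pos hs hM)] with a ha hlt
  by_contra! hle
  exact hlt.not_ge (antitoneOn_upperGamma s ha hM (hle.le.trans (le_max_left _ _)))

end UpperGamma

/-- `gammaTailRatio s x / x` is the hazard rate of the `Gamma(s, 1)` law at `x`. -/
noncomputable def gammaTailRatio (s x : ℝ) : ℝ :=
  x ^ s * exp (-x) / upperGamma s x

section GammaTailRatio

variable {s x : ℝ}

theorem upperGamma_add_one_eq_mul (hs : 0 ≤ s) (hx : 0 < x) :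
    upperGamma (s + 1) x = (gammaTailRatio s x + s) * upperGamma s x := by
  rw [upperGamma_add_one s hx, gammaTailRatio, add_mul,
    div_mul_cancel₀ _ (upperGamma_pos hs hx).ne']

theorem upperGamma_add_two_eq_mul (hs : 0 ≤ s) (hx : 0 < x) :
    upperGamma (s + 2) x =
      (x * gammaTailRatio s x + (s + 1) * (gammaTailRatio s x + s)) * upperGamma s x := by
  rw [show s + 2 = s + 1 + 1 by ring, upperGamma_add_one _ hx, rpow_add_one hx.ne',
    upperGamma_add_one_eq_mul hs hx, gammaTailRatio]
  field_simp [(upperGamma_pos hs hx).ne']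

theorem sub_le_gammaTailRatio (hs : 0 ≤ s) (hx : 0 < x) : x - s ≤ gammaTailRatio s x := by
  have h := mul_upperGamma_le_upperGamma_add_one s hx
  rw [upperGamma_add_one_eq_mul hs hx] at h
  have := le_of_mul_le_mul_right h (upperGamma_pos hs hx)
  linarith

theorem gammaTailRatio_le_add_one (hs : 0 ≤ s) (hx : 0 < x) : gammaTailRatio s x ≤ x + 1 :=
  div_le_of_le_mul₀ (upperGamma_nonneg s hx.le) (by linarith)
    (rpow_mul_exp_neg_le_add_one_mul_upperGamma hs hx)

end GammaTailRatio

theorem abs_variance_numerator_le {m x r t : ℝ} (hm : 0 < m) (hx : 1 ≤ x) (hr₁ : x - m ≤ r)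
    (hr₂ : r ≤ x + 1) (ht₀ : 0 ≤ t) (ht₁ : t ≤ 1) :
    |x * r + (m + 1) * (r + m) - (r + m) ^ 2 + (r + m - x) ^ 2 * t| ≤ 2 * (m + 2) ^ 2 * x := by
  set d := r + m - x with hd
  have hd₀ : 0 ≤ d := by linarith
  have hd₁ : d ≤ m + 1 := by linarith
  have hexpr : x * r + (m + 1) * (r + m) - (r + m) ^ 2 + d ^ 2 * t
      = r * (1 - d) + m + d ^ 2 * t := by
    rw [hd]; ring
  have hdt₀ : 0 ≤ d ^ 2 * t := by positivity
  have hdt₁ : d ^ 2 * t ≤ (m + 1) ^ 2 := by nlinarith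
  rw [hexpr, abs_le]
  constructor <;>
    nlinarith [mul_nonneg hd₀ (sub_nonneg.2 hd₁), mul_nonneg (sub_nonneg.2 hx) hm.le]

section Moments

variable {m L N υ Γ μ σbarSq σSq : ℝ}

theorem mean_eq_gammaTailRatio (hm : 0 < m) (hυ : 0 < υ) (hL : L ≠ 0) (hN : N ≠ 0)
    (hG : upperGamma m (m * υ) = L / N * Γ)
    (hμ : μ = N * upperGamma (m + 1) (m * υ) / (m * Γ)) :
    μ = L * (gammaTailRatio m (m * υ) + m) / m := by
  have hx : 0 < m * υ := mul_pos hm hυ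
  have hΓ : Γ = N / L * upperGamma m (m * υ) := by rw [hG]; field_simp
  rw [hμ, hΓ, upperGamma_add_one_eq_mul hm.le hx]
  field_simp [(upperGamma_pos hm.le hx).ne']

theorem mul_le_mean (hm : 0 < m) (hυ : 0 < υ) (hL : 0 < L) (hN : N ≠ 0)
    (hG : upperGamma m (m * υ) = L / N * Γ)
    (hμ : μ = N * upperGamma (m + 1) (m * υ) / (m * Γ)) :
    L * υ ≤ μ := by
  rw [mean_eq_gammaTailRatio hm hυ hL.ne' hN hG hμ, mul_div_assoc]
  refine mul_le_mul_of_nonneg_left ?_ hL.le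
  rw [le_div_iff₀ hm]
  linarith [sub_le_gammaTailRatio hm.le (mul_pos hm hυ)]

theorem abs_normalizedVariance_le (hm : 0 < m) (hx : 1 ≤ m * υ) (hL : 1 ≤ L) (hLN : L ≤ N)
    (hG : upperGamma m (m * υ) = L / N * Γ)
    (hμ : μ = N * upperGamma (m + 1) (m * υ) / (m * Γ))
    (hσbar : σbarSq = N * upperGamma (m + 2) (m * υ) / (L * m ^ 2 * Γ) - μ ^ 2 / L ^ 2)
    (hσ : σSq = L * (σbarSq + (υ - μ / L) ^ 2 * (1 - L / N))) :
    |σSq / (L ^ 2 * υ ^ 2)| ≤ 2 * (m + 2) ^ 2 / (m * υ) := by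
  have hυ : 0 < υ := pos_of_mul_pos_right (one_pos.trans_le hx) hm.le
  have hL₀ : 0 < L := one_pos.trans_le hL
  have hN : 0 < N := hL₀.trans_le hLN
  have hx₀ : 0 < m * υ := one_pos.trans_le hx
  have ht₀ : 0 ≤ 1 - L / N := sub_nonneg.2 ((div_le_one hN).2 hLN)
  have ht₁ : 1 - L / N ≤ 1 := sub_le_self _ (by positivity)
  have hnum := abs_variance_numerator_le hm hx (sub_le_gammaTailRatio hm.le hx₀)
    (gammaTailRatio_le_add_one hm.le hx₀) ht₀ ht₁
  set x := m * υ
  set r := gammaTailRatio m x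
  have hΓ : Γ = N / L * upperGamma m x := by rw [hG]; field_simp
  have hval : σSq / (L ^ 2 * υ ^ 2) =
      (x * r + (m + 1) * (r + m) - (r + m) ^ 2 + (r + m - x) ^ 2 * (1 - L / N)) / (L * x ^ 2) := by
    rw [hσ, hσbar, mean_eq_gammaTailRatio hm hυ hL₀.ne' hN.ne' hG hμ, hΓ,
      upperGamma_add_two_eq_mul hm.le hx₀]
    field_simp [(upperGamma_pos hm.le hx₀).ne']
    ring
  have hden : 0 < L * x ^ 2 := by positivity
  rw [hval, abs_div, abs_of_pos hden, div_le_div_iff₀ hden hx₀]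
  calc _ ≤ 2 * (m + 2) ^ 2 * x * x := by gcongr
    _ ≤ 2 * (m + 2) ^ 2 * (L * x ^ 2) := by
      rw [mul_assoc, ← sq]
      exact mul_le_mul_of_nonneg_left (le_mul_of_one_le_left (sq_nonneg x) hL) (by positivity)

end Moments

theorem stmt15 (m : ℝ) (hm : 0 < m) (L : ℕ) (hL : 1 ≤ L)
    (υ μ σbarSq σSq : ℕ → ℝ)
    (hυ : ∀ N : ℕ, L < N →
      0 < υ N ∧ upperGamma m (m * υ N) = ((L : ℝ) / N) * upperGamma m 0)
    (hμ : ∀ N : ℕ, L < N →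
      μ N = N * upperGamma (m + 1) (m * υ N) / (m * upperGamma m 0))
    (hσbar : ∀ N : ℕ, L < N →
      σbarSq N = N * upperGamma (m + 2) (m * υ N) / ((L : ℝ) * m ^ 2 * upperGamma m 0)
        - μ N ^ 2 / (L : ℝ) ^ 2)
    (hσ : ∀ N : ℕ, L < N →
      σSq N = (L : ℝ) * (σbarSq N + (υ N - μ N / (L : ℝ)) ^ 2 * (1 - (L : ℝ) / N))) :
    Tendsto (fun N : ℕ => σSq N / ((L : ℝ) ^ 2 * υ N ^ 2)) atTop (nhds 0) ∧
      Tendsto (fun N : ℕ => σSq N / μ N ^ 2) atTop (nhds 0) := by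
  have hL₁ : (1 : ℝ) ≤ L := by exact_mod_cast hL
  have hx : Tendsto (fun N => m * υ N) atTop atTop := by
    refine tendsto_atTop_of_tendsto_upperGamma_zero hm.le ?_ ?_
    · filter_upwards [eventually_gt_atTop L] with N hN using mul_pos hm (hυ N hN).1
    · have h := (tendsto_const_div_atTop_nhds_zero_nat (L : ℝ)).mul_const (upperGamma m 0)
      rw [zero_mul] at h
      refine h.congr' ?_
      filter_upwards [eventually_gt_atTop L] with N hN using (hυ N hN).2.symm
  have hbound : ∀ᶠ N in atTop,
      ‖σSq N / ((L : ℝ) ^ 2 * υ N ^ 2)‖ ≤ 2 * (m + 2) ^ 2 / (m * υ N) ∧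
        ‖σSq N / μ N ^ 2‖ ≤ 2 * (m + 2) ^ 2 / (m * υ N) := by
    filter_upwards [eventually_gt_atTop L, hx.eventually_ge_atTop 1] with N hN hx₁
    have hLN : (L : ℝ) < N := by exact_mod_cast hN
    have hN₀ : (0 : ℝ) < N := by linarith
    have hvar := abs_normalizedVariance_le hm hx₁ hL₁ hLN.le (hυ N hN).2 (hμ N hN) (hσbar N hN)
      (hσ N hN)
    have hmean := mul_le_mean hm (hυ N hN).1 (by positivity) hN₀.ne' (hυ N hN).2 (hμ N hN)
    have hLυ : 0 < (L : ℝ) * υ N := mul_pos (by positivity) (hυ N hN).1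
    refine ⟨hvar, hvar.trans' ?_⟩
    rw [Real.norm_eq_abs, abs_div, abs_div, ← mul_pow]
    gcongr
  have hlim := hx.const_div_atTop (2 * (m + 2) ^ 2)
  exact ⟨squeeze_zero_norm' (hbound.mono fun _ h => h.1) hlim,
    squeeze_zero_norm' (hbound.mono fun _ h => h.2) hlim⟩
end
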